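/- For every r_obs > 0 and every t > 0, one has ∫₀^t [ erf( r_obs/(2√τ) ) − (r_obs/√(πτ))·exp(−r_obs²/(4τ)) ] dτ = erf( r_obs/(2√t) )·( t − r_obs²/2 ) − r_obs·√(t/π)·exp(−r_obs²/(4t)) + r_obs²/2. -/

import Mathlib

/-!
With `x = r / (2√τ)` the integrand is `erf x − (2/√π) x e^{−x²}`, the Maxwell–Boltzmann
distribution function, which is nonnegative because its derivative `(4/√π) x² e^{−x²}` is; this
makes the integrand integrable on `(0, t]`. The right-hand side, as a function of `t`, is a
primitive of the integrand on `(0, ∞)` and tends to `0` as `t → 0⁺` (since `erf x → 1` as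
`x → ∞`), so the fundamental theorem of calculus gives the identity.
-/

open Real MeasureTheory Filter Topology Set

noncomputable def erf (a : ℝ) : ℝ := (2 / Real.sqrt π) * ∫ b in (0:ℝ)..a, Real.exp (-b^2)

lemma hasDerivAt_erf (x : ℝ) : HasDerivAt erf (2 / √π * exp (-x ^ 2)) x :=
  ((by fun_prop : Continuous fun b : ℝ => exp (-b ^ 2)).integral_hasStrictDerivAt 0 x)
    |>.hasDerivAt.const_mul _

lemma erf_zero : erf 0 = 0 := by
  simp [erf]

lemma tendsto_erf_atTop : Tendsto erf atTop (𝓝 1) := by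
  have hI : IntegrableOn (fun b : ℝ => exp (-b ^ 2)) (Ioi 0) := by
    simpa using (integrable_exp_neg_mul_sq one_pos).integrableOn
  have hgauss : ∫ b in Ioi (0 : ℝ), exp (-b ^ 2) = √π / 2 := by
    simpa using integral_gaussian_Ioi 1
  have h := (intervalIntegral_tendsto_integral_Ioi 0 hI tendsto_id).const_mul (2 / √π)
  have hπ : √π ≠ 0 := (sqrt_pos.2 pi_pos).ne'
  rwa [hgauss, div_mul_div_comm, mul_comm, div_self (mul_ne_zero hπ two_ne_zero)] at h

/-- The Maxwell–Boltzmann distribution function with scale parameter `1/√2`. -/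
noncomputable def maxwellCDF (x : ℝ) : ℝ := erf x - 2 / √π * x * exp (-x ^ 2)

lemma hasDerivAt_maxwellCDF (x : ℝ) :
    HasDerivAt maxwellCDF (4 / √π * x ^ 2 * exp (-x ^ 2)) x := by
  have hgauss : HasDerivAt (fun x => exp (-x ^ 2)) (exp (-x ^ 2) * -(2 * x)) x := by
    simpa using ((hasDerivAt_pow 2 x).neg).exp
  exact ((hasDerivAt_erf x).sub (((hasDerivAt_id' x).const_mul (2 / √π)).mul hgauss)).congr_deriv
    (by ring)

lemma maxwellCDF_nonneg {x : ℝ} (hx : 0 ≤ x) : 0 ≤ maxwellCDF x := by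
  have hmono : Monotone maxwellCDF :=
    monotone_of_hasDerivAt_nonneg hasDerivAt_maxwellCDF fun x => by positivity
  simpa [maxwellCDF, erf_zero] using hmono hx

/-- The nonnegativity of `f'` is what makes it integrable. -/
theorem integral_eq_sub_of_hasDerivAt_of_tendsto_of_nonneg {f f' : ℝ → ℝ} {a b fa : ℝ}
    (hab : a < b) (hderiv : ∀ x ∈ Ioc a b, HasDerivAt f (f' x) x)
    (hpos : ∀ x ∈ Ioo a b, 0 ≤ f' x) (ha : Tendsto f (𝓝[>] a) (𝓝 fa)) :
    ∫ x in a..b, f' x = f b - fa := by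
  let g := Function.update f a fa
  have hgf : ∀ x ∈ Ioc a b, g =ᶠ[𝓝 x] f := fun x hx =>
    (eventually_ne_nhds hx.1.ne').mono fun y hy => Function.update_of_ne hy _ _
  have hcont : ContinuousOn g (Icc a b) := by
    intro x hx
    rcases hx.1.eq_or_lt with rfl | hax
    · exact continuousWithinAt_update_same.2 <| ha.mono_left <| nhdsWithin_mono _ fun y hy =>
        lt_of_le_of_ne hy.1.1 (Ne.symm hy.2)
    · exact ((hderiv x ⟨hax, hx.2⟩).continuousAt.congr_of_eventuallyEq
        (hgf x ⟨hax, hx.2⟩)).continuousWithinAt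
  have hgderiv : ∀ x ∈ Ioo a b, HasDerivAt g (f' x) x := fun x hx =>
    (hderiv x (Ioo_subset_Ioc_self hx)).congr_of_eventuallyEq (hgf x (Ioo_subset_Ioc_self hx))
  have hint : IntervalIntegrable f' volume a b := by
    refine intervalIntegral.intervalIntegrable_deriv_of_nonneg (g := g) ?_ ?_ ?_ <;>
      simpa only [uIcc_of_le hab.le, min_eq_left hab.le, max_eq_right hab.le]
  rw [intervalIntegral.integral_eq_sub_of_hasDerivAt_of_le hab.le hcont hgderiv hint]
  simp [g, hab.ne']

lemma div_two_sqrt_sq (r : ℝ) {τ : ℝ} (hτ : 0 ≤ τ) : (r / (2 * √τ)) ^ 2 = r ^ 2 / (4 * τ) := by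
  rw [div_pow, mul_pow, sq_sqrt hτ]
  norm_num

noncomputable def impactPrimitive (r τ : ℝ) : ℝ :=
  erf (r / (2 * √τ)) * (τ - r ^ 2 / 2) - r * √(τ / π) * exp (-r ^ 2 / (4 * τ)) + r ^ 2 / 2

lemma hasDerivAt_impactPrimitive (r : ℝ) {τ : ℝ} (hτ : 0 < τ) :
    HasDerivAt (impactPrimitive r) (maxwellCDF (r / (2 * √τ))) τ := by
  have hx : HasDerivAt (fun τ => r / (2 * √τ)) (-(r / (2 * √τ)) / (2 * τ)) τ := by
    refine ((hasDerivAt_const τ r).div ((hasDerivAt_sqrt hτ.ne').const_mul 2)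
      (by positivity)).congr_deriv ?_
    field_simp
    rw [sq_sqrt hτ.le]
    ring
  have hsq : HasDerivAt (fun τ => √(τ / π)) (1 / (2 * √τ * √π)) τ := by
    refine ((hasDerivAt_sqrt (by positivity)).comp τ
      ((hasDerivAt_id' τ).div_const π)).congr_deriv ?_
    rw [sqrt_div hτ.le]
    field_simp
    rw [sq_sqrt pi_pos.le]
  have hexp : HasDerivAt (fun τ => exp (-r ^ 2 / (4 * τ)))
      (exp (-r ^ 2 / (4 * τ)) * (r ^ 2 / (4 * τ ^ 2))) τ := by
    refine ((hasDerivAt_const τ (-r ^ 2)).div ((hasDerivAt_id' τ).const_mul 4)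
      (by positivity)).exp.congr_deriv ?_
    simp only [Pi.div_apply]
    field_simp
    ring
  refine ((((hasDerivAt_erf _).comp τ hx).mul ((hasDerivAt_id' τ).sub_const (r ^ 2 / 2))).sub
    ((hsq.const_mul r).mul hexp)).add_const (r ^ 2 / 2) |>.congr_deriv ?_
  simp only [maxwellCDF, Function.comp_apply]
  rw [div_two_sqrt_sq r hτ.le, sqrt_div hτ.le]
  field_simp
  rw [sq_sqrt hτ.le]
  ring

lemma tendsto_div_two_sqrt_nhdsGT_zero {r : ℝ} (hr : 0 < r) :
    Tendsto (fun τ => r / (2 * √τ)) (𝓝[>] 0) atTop := by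
  have hsqrt : Tendsto (√·) (𝓝[>] 0) (𝓝[>] 0) :=
    tendsto_nhdsWithin_iff.2 ⟨(continuous_sqrt.tendsto' 0 0 sqrt_zero).mono_left
      nhdsWithin_le_nhds, eventually_nhdsWithin_of_forall fun _ hτ => sqrt_pos.2 hτ⟩
  refine (hsqrt.inv_tendsto_nhdsGT_zero.const_mul_atTop (half_pos hr)).congr fun τ => ?_
  simp only [Pi.inv_apply]
  ring

lemma tendsto_impactPrimitive_nhdsGT_zero {r : ℝ} (hr : 0 < r) :
    Tendsto (impactPrimitive r) (𝓝[>] 0) (𝓝 0) := by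
  have hx := tendsto_div_two_sqrt_nhdsGT_zero hr
  have hexp : Tendsto (fun τ => exp (-r ^ 2 / (4 * τ))) (𝓝[>] 0) (𝓝 0) := by
    refine (tendsto_exp_neg_atTop_nhds_zero.comp ((tendsto_pow_atTop two_ne_zero).comp hx)).congr'
      (eventually_nhdsWithin_of_forall fun τ hτ => ?_)
    simp only [Function.comp_apply, div_two_sqrt_sq r (le_of_lt hτ), neg_div]
  have hcont : ∀ {g : ℝ → ℝ}, Continuous g → Tendsto g (𝓝[>] 0) (𝓝 (g 0)) :=
    fun hg => hg.continuousAt.tendsto.mono_left nhdsWithin_le_nhds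
  have h := ((tendsto_erf_atTop.comp hx).mul
    (hcont (g := fun τ => τ - r ^ 2 / 2) (by fun_prop))).sub
    ((hcont (g := fun τ => r * √(τ / π)) (by fun_prop)).mul hexp) |>.add_const (r ^ 2 / 2)
  convert h using 2
  · rfl
  · simp

lemma integrand_eq_maxwellCDF (r : ℝ) {τ : ℝ} (hτ : 0 ≤ τ) :
    erf (r / (2 * √τ)) - r / √(π * τ) * exp (-r ^ 2 / (4 * τ)) = maxwellCDF (r / (2 * √τ)) := by
  rw [maxwellCDF, div_two_sqrt_sq r hτ, sqrt_mul pi_pos.le, neg_div]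
  ring

/-- The time-varying impact of the worst-case noise source (located at the receiver),
with no flow and no molecule degradation. -/
theorem time_varying_impact_worst_case (r_obs t : ℝ) (hr : 0 < r_obs) (ht : 0 < t) :
    ∫ τ in (0:ℝ)..t,
      (erf (r_obs / (2 * Real.sqrt τ))
        - (r_obs / Real.sqrt (π*τ)) * Real.exp (-(r_obs^2) / (4*τ)))
    = erf (r_obs / (2 * Real.sqrt t)) * (t - r_obs^2/2)
      - r_obs * Real.sqrt (t/π) * Real.exp (-(r_obs^2) / (4*t))
      + r_obs^2/2 := by
  rw [intervalIntegral.integral_congr fun τ hτ =>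
    integrand_eq_maxwellCDF r_obs (uIcc_of_le ht.le ▸ hτ).1]
  exact (integral_eq_sub_of_hasDerivAt_of_tendsto_of_nonneg ht
    (fun τ hτ => hasDerivAt_impactPrimitive r_obs hτ.1)
    (fun τ hτ => maxwellCDF_nonneg (by have := hτ.1; positivity))
    (tendsto_impactPrimitive_nhdsGT_zero hr)).trans (sub_zero _)
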